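/- arXiv:2111.11713 — 2 statements merged into one kernel-verified Lean document; each statement's English description precedes it below -/
import Mathlib

section
/- Let H be a complex Hilbert space, Q ⊆ ℂⁿ a complete circular domain centered at 0, and suppose f : Q → 𝓑(H) has a homogeneous polynomial expansion f(z) = ∑_{k=0}^∞ P_k(z) converging at every z ∈ Q, with ‖f(z)‖ < 1 for all z ∈ Q and f(0) = a₀·I for some a₀ ∈ ℂ with |a₀| < 1; assume also that ∑_{k=1}^∞ k‖P_k(z)‖² converges at every z ∈ Q. Then for every w ∈ Q and every r ∈ [0,1/3], the point z = r·w satisfies ∑_{k=0}^∞ ‖P_k(z)‖ + (8/9)·∑_{k=1}^∞ k‖P_k(z)‖² ≤ 1. -/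
/-!
On the complex line through `w`, `g ξ = f (ξ • w) = ∑ ξᵏ Pₖ(w)` is holomorphic on the unit disc
with `‖g‖ < 1` and `g 0 = a₀ I`. The operator Möbius map `T ↦ (T - a₀)(1 - ā₀T)⁻¹` sends the open
unit ball of `𝓑(H)` into itself and `a₀ I` to `0`, so Schwarz's lemma applied to its composite
with `g` gives `‖P₁(w)‖ ≤ 1 - |a₀|²`; averaging `g` over `k`-th roots of unity turns `Pₖ(w)` into
a first coefficient, so the same bound holds for every `k ≥ 1`. As `‖Pₖ(r w)‖ = rᵏ ‖Pₖ(w)‖`,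
summing the geometric series for `r ≤ 1/3` leaves `|a₀| + (1 - |a₀|²)/2 + (1 - |a₀|²)²/8 ≤ 1`,
which is `(1 - |a₀|)³ (3 + |a₀|) ≥ 0`.
-/

open Metric Set Finset ComplexConjugate

theorem IsPrimitiveRoot.sum_pow_pow_eq_ite {K : Type*} [Field K] {ω : K} {k : ℕ}
    (hω : IsPrimitiveRoot ω k) (m : ℕ) :
    ∑ j ∈ range k, (ω ^ m) ^ j = if k ∣ m then (k : K) else 0 := by
  split_ifs with hdvd
  · simp [(hω.pow_eq_one_iff_dvd m).mpr hdvd]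
  · have hne : ω ^ m ≠ 1 := fun h => hdvd ((hω.pow_eq_one_iff_dvd m).mp h)
    rw [geom_sum_eq hne, ← pow_mul, mul_comm, pow_mul, hω.pow_eq_one, one_pow, sub_self,
      zero_div]

section PowerSeries

variable {E : Type*} [NormedAddCommGroup E] [NormedSpace ℂ E]

theorem hasSum_zero_pow_smul (c : ℕ → E) : HasSum (fun m => (0 : ℂ) ^ m • c m) (c 0) := by
  simpa using hasSum_single (f := fun m => (0 : ℂ) ^ m • c m) 0 fun m hm => by simp [hm]

/-- Root-of-unity filter: averaging over the points `ωʲ ζ` kills the terms with `k ∤ m`. -/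
theorem hasSum_comp_mul_of_isPrimitiveRoot {c : ℕ → E} {k : ℕ} (hk : k ≠ 0) {ω : ℂ}
    (hω : IsPrimitiveRoot ω k) (ζ : ℂ) {L : ℕ → E}
    (hL : ∀ j ∈ range k, HasSum (fun m => (ω ^ j * ζ) ^ m • c m) (L j)) :
    HasSum (fun m => (ζ ^ k) ^ m • c (m * k)) ((k : ℂ)⁻¹ • ∑ j ∈ range k, L j) := by
  have hk' : (k : ℂ) ≠ 0 := Nat.cast_ne_zero.mpr hk
  have hfilter : ∀ m, (k : ℂ)⁻¹ • ∑ j ∈ range k, (ω ^ j * ζ) ^ m • c m =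
      if k ∣ m then ζ ^ m • c m else 0 := by
    intro m
    simp_rw [mul_pow, pow_right_comm ω _ m, ← Finset.sum_smul, ← Finset.sum_mul,
      hω.sum_pow_pow_eq_ite, smul_smul]
    split_ifs <;> simp [hk']
  have hsum := (hasSum_sum hL).const_smul (k : ℂ)⁻¹
  simp_rw [hfilter] at hsum
  have hinj : Function.Injective (· * k) := mul_left_injective₀ hk
  rw [← hinj.hasSum_iff fun m hm => if_neg fun ⟨q, hq⟩ => hm ⟨q, by rw [hq, mul_comm]⟩] at hsum
  simpa [Function.comp_def, ← pow_mul, mul_comm] using hsum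

theorem exists_hasSum_comp_mul_mem_ball {c : ℕ → E} {g : ℂ → E}
    (hg : ∀ ξ ∈ ball (0 : ℂ) 1, HasSum (fun m => ξ ^ m • c m) (g ξ))
    (hmaps : MapsTo g (ball 0 1) (ball 0 1)) {k : ℕ} (hk : k ≠ 0) :
    ∀ η ∈ ball (0 : ℂ) 1, ∃ L ∈ ball 0 1, HasSum (fun m => η ^ m • c (m * k)) L := by
  intro η hη
  obtain ⟨ω, hω⟩ : ∃ ω : ℂ, IsPrimitiveRoot ω k := ⟨_, Complex.isPrimitiveRoot_exp k hk⟩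
  obtain ⟨ζ, rfl⟩ := IsAlgClosed.exists_pow_nat_eq η (Nat.pos_of_ne_zero hk)
  have hζ : ‖ζ‖ < 1 := by
    simpa [norm_pow, pow_lt_one_iff_of_nonneg (norm_nonneg ζ) hk] using hη
  have hball : ∀ j, ω ^ j * ζ ∈ ball (0 : ℂ) 1 := fun j => by
    simpa [norm_mul, norm_pow, hω.norm'_eq_one hk] using hζ
  refine ⟨_, ?_, hasSum_comp_mul_of_isPrimitiveRoot hk hω ζ fun j _ => hg _ (hball j)⟩
  have hlt : ‖∑ j ∈ range k, g (ω ^ j * ζ)‖ < k := by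
    calc ‖∑ j ∈ range k, g (ω ^ j * ζ)‖ ≤ ∑ j ∈ range k, ‖g (ω ^ j * ζ)‖ := norm_sum_le _ _
      _ < ∑ _j ∈ range k, 1 := sum_lt_sum_of_nonempty (nonempty_range_iff.mpr hk)
          fun j _ => mem_ball_zero_iff.mp (hmaps (hball j))
      _ = k := by simp
  rwa [mem_ball_zero_iff, norm_smul, norm_inv, Complex.norm_natCast,
    inv_mul_lt_one₀ (Nat.cast_pos.mpr (Nat.pos_of_ne_zero hk))]

noncomputable def coeffSeries (c : ℕ → E) : FormalMultilinearSeries ℂ ℂ E :=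
  fun m => ContinuousMultilinearMap.mkPiRing ℂ (Fin m) (c m)

@[simp]
theorem coeff_coeffSeries (c : ℕ → E) (m : ℕ) : (coeffSeries c).coeff m = c m := by
  simp [coeffSeries, FormalMultilinearSeries.coeff]

theorem one_le_radius_coeffSeries {c : ℕ → E}
    (h : ∀ ξ : ℂ, ‖ξ‖ < 1 → Summable fun m => ξ ^ m • c m) : 1 ≤ (coeffSeries c).radius := by
  refine ENNReal.le_of_forall_nnreal_lt fun r hr => ?_
  have hr1 : ‖(r : ℂ)‖ < 1 := by simpa using hr
  refine (coeffSeries c).le_radius_of_tendsto (l := 0) ?_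
  simpa [norm_smul, mul_comm] using (h r hr1).tendsto_atTop_zero.norm

theorem hasFPowerSeriesOnBall_coeffSeries {c : ℕ → E} {g : ℂ → E}
    (hg : ∀ ξ ∈ ball (0 : ℂ) 1, HasSum (fun m => ξ ^ m • c m) (g ξ)) :
    HasFPowerSeriesOnBall g (coeffSeries c) 0 1 where
  r_le := one_le_radius_coeffSeries fun ξ hξ => (hg ξ (mem_ball_zero_iff.mpr hξ)).summable
  r_pos := one_pos
  hasSum {y} hy := by
    rw [Metric.mem_eball, edist_zero_right, enorm_eq_nnnorm] at hy
    simpa using hg y (mem_ball_zero_iff.mpr (mod_cast hy))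

end PowerSeries

section OperatorValued

variable {H : Type*} [NormedAddCommGroup H] [InnerProductSpace ℂ H]

theorem norm_sub_smul_sq_add_mul_eq (a : ℂ) (u y : H) :
    ‖u - a • y‖ ^ 2 + (1 - ‖a‖ ^ 2) * (‖y‖ ^ 2 - ‖u‖ ^ 2) = ‖y - conj a • u‖ ^ 2 := by
  have h_re : RCLike.re (conj a * inner ℂ y u) = RCLike.re (a * inner ℂ u y) := by
    rw [← inner_conj_symm y u, ← map_mul, RCLike.conj_re]
  rw [norm_sub_sq (𝕜 := ℂ), norm_sub_sq (𝕜 := ℂ), inner_smul_right, inner_smul_right,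
    norm_smul, norm_smul, RCLike.norm_conj, h_re]
  ring

theorem norm_apply_sub_smul_sq_le (T : H →L[ℂ] H) {a : ℂ} (ha : ‖a‖ ≤ 1) (y : H) :
    ‖T y - a • y‖ ^ 2 ≤
      ‖y - conj a • T y‖ ^ 2 - (1 - ‖a‖ ^ 2) * (1 - ‖T‖ ^ 2) * ‖y‖ ^ 2 := by
  have hTy : ‖T y‖ ^ 2 ≤ ‖T‖ ^ 2 * ‖y‖ ^ 2 := by
    rw [← mul_pow]; exact pow_le_pow_left₀ (norm_nonneg _) (T.le_opNorm y) 2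
  have ha2 : 0 ≤ 1 - ‖a‖ ^ 2 := by nlinarith [norm_nonneg a]
  rw [← norm_sub_smul_sq_add_mul_eq]
  nlinarith [mul_le_mul_of_nonneg_left hTy ha2]

/-- `Ring.inverse` is `0` at non-units; `1 - āT` is a unit whenever `‖T‖ < 1`. -/
noncomputable def opMobius (a : ℂ) (T : H →L[ℂ] H) : H →L[ℂ] H :=
  (T - a • 1) * Ring.inverse (1 - conj a • T)

theorem opMobius_smul_one (a : ℂ) : opMobius a (a • 1 : H →L[ℂ] H) = 0 := by
  simp [opMobius]

variable [CompleteSpace H]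

theorem isUnit_one_sub_conj_smul {T : H →L[ℂ] H} (hT : ‖T‖ < 1) {a : ℂ} (ha : ‖a‖ < 1) :
    IsUnit (1 - conj a • T) := by
  refine isUnit_one_sub_of_norm_lt_one ?_
  rw [norm_smul, RCLike.norm_conj]
  nlinarith [norm_nonneg a, norm_nonneg T]

theorem norm_opMobius_lt_one {T : H →L[ℂ] H} (hT : ‖T‖ < 1) {a : ℂ} (ha : ‖a‖ < 1) :
    ‖opMobius a T‖ < 1 := by
  set κ := (1 - ‖a‖ ^ 2) * (1 - ‖T‖ ^ 2)
  have hκ : 0 < κ := mul_pos (by nlinarith [norm_nonneg a]) (by nlinarith [norm_nonneg T])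
  have hκ1 : κ ≤ 1 := by
    have := mul_le_mul (sub_le_self 1 (sq_nonneg ‖a‖)) (sub_le_self 1 (sq_nonneg ‖T‖))
      (by nlinarith [norm_nonneg T]) zero_le_one
    linarith
  -- With `x = (1 - āT) y` we have `‖x‖ ≤ 2‖y‖`, so the defect `κ‖y‖²` is at least `κ‖x‖²/4`.
  have hbound : ∀ x, ‖opMobius a T x‖ ^ 2 ≤ (1 - κ / 4) * ‖x‖ ^ 2 := by
    intro x
    set y := Ring.inverse (1 - conj a • T) x
    have hxy : y - conj a • T y = x := by
      simpa using congr($(Ring.mul_inverse_cancel _ (isUnit_one_sub_conj_smul hT ha)) x)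
    have hMx : opMobius a T x = T y - a • y := by simp [opMobius, y]
    have hx : ‖x‖ ≤ 2 * ‖y‖ := by
      calc ‖x‖ ≤ ‖y‖ + ‖conj a • T y‖ := hxy ▸ norm_sub_le _ _
        _ ≤ ‖y‖ + ‖y‖ := by
          grw [norm_smul, RCLike.norm_conj, T.le_opNorm, ← mul_assoc]
          gcongr
          exact mul_le_of_le_one_left (norm_nonneg y) (by nlinarith [norm_nonneg T])
        _ = 2 * ‖y‖ := by ring
    have hx2 : ‖x‖ ^ 2 ≤ 4 * ‖y‖ ^ 2 := by nlinarith [norm_nonneg x]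
    have hsq := norm_apply_sub_smul_sq_le T ha.le y
    rw [hxy] at hsq
    rw [hMx]
    nlinarith [mul_le_mul_of_nonneg_left hx2 hκ.le]
  have hle : ‖opMobius a T‖ ≤ √(1 - κ / 4) := by
    refine ContinuousLinearMap.opNorm_le_bound _ (Real.sqrt_nonneg _) fun x => ?_
    rw [← Real.sqrt_sq (norm_nonneg (opMobius a T x)), ← Real.sqrt_sq (norm_nonneg x),
      ← Real.sqrt_mul (by linarith)]
    exact Real.sqrt_le_sqrt (hbound x)
  exact hle.trans_lt ((Real.sqrt_lt' one_pos).mpr (by linarith))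

theorem norm_smul_one_le (a : ℂ) : ‖(a • 1 : H →L[ℂ] H)‖ ≤ ‖a‖ :=
  (norm_smul_le _ _).trans <| mul_le_of_le_one_right (norm_nonneg _) <| by
    simpa only [ContinuousLinearMap.one_def] using ContinuousLinearMap.norm_id_le

theorem DifferentiableAt.opMobius_comp {g : ℂ → H →L[ℂ] H} {x : ℂ}
    (hg : DifferentiableAt ℂ g x) {a : ℂ} (hu : IsUnit (1 - conj a • g x)) :
    DifferentiableAt ℂ (fun ξ => opMobius a (g ξ)) x :=
  (hg.sub_const (a • 1)).mul ((hg.const_smul (conj a)).const_sub 1 |>.inverse hu)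

theorem deriv_eq_smul_deriv_opMobius_comp {g : ℂ → H →L[ℂ] H} {x : ℂ}
    (hg : DifferentiableAt ℂ g x) {a : ℂ} (ha : ‖a‖ < 1) (hgx : g x = a • 1) :
    deriv g x = (1 - conj a * a) • deriv (fun ξ => opMobius a (g ξ)) x := by
  have hs : 1 - conj a • g x = (1 - conj a * a) • 1 := by
    rw [hgx, smul_smul, sub_smul, one_smul]
  have hu : IsUnit (1 - conj a • g x) :=
    isUnit_one_sub_conj_smul (hgx ▸ (norm_smul_one_le a).trans_lt ha) ha
  -- product rule, where the factor `g - a` vanishes at `x`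
  have hderiv : HasDerivAt (fun ξ => opMobius a (g ξ))
      (deriv g x * Ring.inverse (1 - conj a • g x)) x := by
    refine ((hg.hasDerivAt.sub_const (a • 1)).fun_mul
      ((hg.const_smul (conj a)).const_sub 1 |>.inverse hu).hasDerivAt).congr_deriv ?_
    rw [Pi.smul_apply, hgx, sub_self, zero_mul, add_zero]
  rw [hderiv.deriv, ← mul_smul_one, mul_assoc, ← hs, Ring.inverse_mul_cancel _ hu, mul_one]

theorem norm_deriv_le_one_sub_sq {g : ℂ → H →L[ℂ] H} (hd : DifferentiableOn ℂ g (ball 0 1))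
    (hg : MapsTo g (ball 0 1) (ball 0 1)) {a : ℂ} (ha : ‖a‖ < 1) (hg0 : g 0 = a • 1) :
    ‖deriv g 0‖ ≤ 1 - ‖a‖ ^ 2 := by
  have hdiff : ∀ ξ ∈ ball (0 : ℂ) 1, DifferentiableAt ℂ g ξ := fun ξ hξ =>
    hd.differentiableAt (isOpen_ball.mem_nhds hξ)
  have hschwarz : ‖deriv (fun ξ => opMobius a (g ξ)) 0‖ ≤ 1 := by
    refine Complex.norm_deriv_le_one_of_mapsTo_ball (fun ξ hξ => ?_) (fun ξ hξ => ?_) one_pos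
    · exact ((hdiff ξ hξ).opMobius_comp
        (isUnit_one_sub_conj_smul (mem_ball_zero_iff.mp (hg hξ)) ha)).differentiableWithinAt
    · rw [hg0, opMobius_smul_one, mem_closedBall_zero_iff]
      exact (norm_opMobius_lt_one (mem_ball_zero_iff.mp (hg hξ)) ha).le
  have ha2 : 0 ≤ 1 - ‖a‖ ^ 2 := by nlinarith [norm_nonneg a]
  have hs : ‖1 - conj a * a‖ = 1 - ‖a‖ ^ 2 := by
    rw [Complex.conj_mul', ← Complex.ofReal_pow, ← Complex.ofReal_one, ← Complex.ofReal_sub,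
      Complex.norm_real, Real.norm_of_nonneg ha2]
  rw [deriv_eq_smul_deriv_opMobius_comp (hdiff 0 (mem_ball_self one_pos)) ha hg0, norm_smul, hs]
  exact mul_le_of_le_one_right ha2 hschwarz

theorem norm_coeff_one_le {c : ℕ → H →L[ℂ] H} {g : ℂ → H →L[ℂ] H}
    (hg : ∀ ξ ∈ ball (0 : ℂ) 1, HasSum (fun m => ξ ^ m • c m) (g ξ))
    (hmaps : MapsTo g (ball 0 1) (ball 0 1)) {a : ℂ} (ha : ‖a‖ < 1) (hg0 : g 0 = a • 1) :
    ‖c 1‖ ≤ 1 - ‖a‖ ^ 2 := by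
  have hps := hasFPowerSeriesOnBall_coeffSeries hg
  have hd : DifferentiableOn ℂ g (ball 0 1) := by
    simpa only [← ENNReal.coe_one, Metric.eball_coe, NNReal.coe_one] using hps.differentiableOn
  simpa [hps.hasFPowerSeriesAt.deriv] using norm_deriv_le_one_sub_sq hd hmaps ha hg0

/-- Reduced to `k = 1` by passing to the series `∑ₘ ηᵐ c_{mk}`, whose values are averages of
values of `g`. -/
theorem norm_coeff_le {c : ℕ → H →L[ℂ] H} {g : ℂ → H →L[ℂ] H}
    (hg : ∀ ξ ∈ ball (0 : ℂ) 1, HasSum (fun m => ξ ^ m • c m) (g ξ))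
    (hmaps : MapsTo g (ball 0 1) (ball 0 1)) {a : ℂ} (ha : ‖a‖ < 1) (hg0 : g 0 = a • 1)
    {k : ℕ} (hk : k ≠ 0) : ‖c k‖ ≤ 1 - ‖a‖ ^ 2 := by
  have hroot := exists_hasSum_comp_mul_mem_ball hg hmaps hk
  set G := fun η : ℂ => ∑' m, η ^ m • c (m * k)
  have hG : ∀ η ∈ ball (0 : ℂ) 1, HasSum (fun m => η ^ m • c (m * k)) (G η) := fun η hη =>
    let ⟨_, _, hL⟩ := hroot η hη; hL.summable.hasSum
  have hGmaps : MapsTo G (ball 0 1) (ball 0 1) := fun η hη => by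
    obtain ⟨L, hL1, hL⟩ := hroot η hη
    rwa [(hG η hη).unique hL]
  have hG0 : G 0 = a • 1 := by
    have h0 : (0 : ℂ) ∈ ball 0 1 := mem_ball_self one_pos
    rw [(hG 0 h0).unique (hasSum_zero_pow_smul fun m => c (m * k)), zero_mul, ← hg0,
      (hg 0 h0).unique (hasSum_zero_pow_smul c)]
  simpa using norm_coeff_one_le hG hGmaps ha hG0

end OperatorValued

section BohrSums

variable {b : ℕ → ℝ} {t M r : ℝ}

theorem summable_pow_mul_and_tsum_le (hb : ∀ k, 0 ≤ b k) (hb0 : b 0 ≤ t)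
    (hbM : ∀ k, k ≠ 0 → b k ≤ M) (hr0 : 0 ≤ r) (hr1 : r < 1) :
    Summable (fun k => r ^ k * b k) ∧ ∑' k, r ^ k * b k ≤ t + M * (r / (1 - r)) := by
  have hgeom := summable_geometric_of_lt_one hr0 hr1
  have hsucc : ∀ k, r ^ (k + 1) * b (k + 1) ≤ M * r * r ^ k := fun k =>
    calc r ^ (k + 1) * b (k + 1) ≤ r ^ (k + 1) * M :=
          mul_le_mul_of_nonneg_left (hbM _ k.succ_ne_zero) (by positivity)
      _ = M * r * r ^ k := by ring
  have hs : Summable (fun k => r ^ (k + 1) * b (k + 1)) :=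
    .of_nonneg_of_le (fun k => mul_nonneg (by positivity) (hb _)) hsucc (hgeom.mul_left _)
  have hs' : Summable (fun k => r ^ k * b k) := (summable_nat_add_iff 1).mp hs
  refine ⟨hs', ?_⟩
  calc ∑' k, r ^ k * b k = b 0 + ∑' k, r ^ (k + 1) * b (k + 1) := by
        simpa using hs'.tsum_eq_zero_add
    _ ≤ t + ∑' k, M * r * r ^ k := add_le_add hb0 (hs.tsum_le_tsum hsucc (hgeom.mul_left _))
    _ = t + M * (r / (1 - r)) := by
        rw [tsum_mul_left, tsum_geometric_of_lt_one hr0 hr1]; ring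

theorem summable_mul_sq_and_tsum_le (hb : ∀ k, 0 ≤ b k) (hbM : ∀ k, k ≠ 0 → b k ≤ M)
    (hr0 : 0 ≤ r) (hr1 : r < 1) :
    Summable (fun k : ℕ => (k : ℝ) * (r ^ k * b k) ^ 2) ∧
      ∑' k : ℕ, (k : ℝ) * (r ^ k * b k) ^ 2 ≤ M ^ 2 * (r ^ 2 / (1 - r ^ 2) ^ 2) := by
  have hr2 : ‖r ^ 2‖ < 1 := by
    rw [Real.norm_of_nonneg (by positivity)]; nlinarith
  have hgeom : Summable (fun k : ℕ => (k : ℝ) * (r ^ 2) ^ k) := by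
    simpa using summable_pow_mul_geometric_of_norm_lt_one 1 hr2
  have hle : ∀ k : ℕ, (k : ℝ) * (r ^ k * b k) ^ 2 ≤ M ^ 2 * ((k : ℝ) * (r ^ 2) ^ k) := by
    intro k
    rcases eq_or_ne k 0 with rfl | hk
    · simp
    have hsq : b k ^ 2 ≤ M ^ 2 := pow_le_pow_left₀ (hb k) (hbM k hk) 2
    calc (k : ℝ) * (r ^ k * b k) ^ 2 = k * (r ^ 2) ^ k * b k ^ 2 := by ring
      _ ≤ k * (r ^ 2) ^ k * M ^ 2 := mul_le_mul_of_nonneg_left hsq (by positivity)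
      _ = M ^ 2 * ((k : ℝ) * (r ^ 2) ^ k) := by ring
  have hs : Summable (fun k : ℕ => (k : ℝ) * (r ^ k * b k) ^ 2) :=
    .of_nonneg_of_le (fun k => by positivity) hle (hgeom.mul_left _)
  refine ⟨hs, ?_⟩
  calc ∑' k : ℕ, (k : ℝ) * (r ^ k * b k) ^ 2 ≤ ∑' k : ℕ, M ^ 2 * ((k : ℝ) * (r ^ 2) ^ k) :=
        hs.tsum_le_tsum hle (hgeom.mul_left _)
    _ = M ^ 2 * (r ^ 2 / (1 - r ^ 2) ^ 2) := by
        rw [tsum_mul_left, tsum_coe_mul_geometric_of_norm_lt_one hr2]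

theorem improved_bohr_sum_le (hb : ∀ k, 0 ≤ b k) (hb0 : b 0 ≤ t)
    (hb1 : ∀ k, k ≠ 0 → b k ≤ 1 - t ^ 2) (hr0 : 0 ≤ r) (hr : r ≤ 1 / 3) :
    Summable (fun k => r ^ k * b k) ∧ Summable (fun k : ℕ => (k : ℝ) * (r ^ k * b k) ^ 2) ∧
      ∑' k, r ^ k * b k + 8 / 9 * ∑' k : ℕ, (k : ℝ) * (r ^ k * b k) ^ 2 ≤ 1 := by
  have hr1 : r < 1 := by linarith
  obtain ⟨hs₁, hle₁⟩ := summable_pow_mul_and_tsum_le hb hb0 hb1 hr0 hr1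
  obtain ⟨hs₂, hle₂⟩ := summable_mul_sq_and_tsum_le hb hb1 hr0 hr1
  refine ⟨hs₁, hs₂, ?_⟩
  have ht0 : 0 ≤ t := (hb 0).trans hb0
  have ht1 : t ≤ 1 := by nlinarith [(hb 1).trans (hb1 1 one_ne_zero)]
  have hfrac₁ : r / (1 - r) ≤ 1 / 2 := by
    rw [div_le_iff₀ (by linarith)]; linarith
  have hfrac₂ : r ^ 2 / (1 - r ^ 2) ^ 2 ≤ 9 / 64 := by
    have hr19 : r ^ 2 ≤ 1 / 9 := by nlinarith
    have h89 : 64 / 81 ≤ (1 - r ^ 2) ^ 2 := by nlinarith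
    rw [div_le_iff₀ (by positivity)]; linarith
  have hu : 0 ≤ 1 - t ^ 2 := by nlinarith
  calc ∑' k, r ^ k * b k + 8 / 9 * ∑' k : ℕ, (k : ℝ) * (r ^ k * b k) ^ 2
      ≤ t + (1 - t ^ 2) * (1 / 2) + 8 / 9 * ((1 - t ^ 2) ^ 2 * (9 / 64)) := by
        gcongr
        · exact hle₁.trans (by gcongr)
        · exact hle₂.trans (by gcongr)
    _ ≤ 1 := by
        nlinarith [mul_nonneg (pow_nonneg (sub_nonneg.mpr ht1) 3) (by linarith : 0 ≤ 3 + t)]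

end BohrSums

theorem apply_smul_of_hasSum_monomials {E : Type*} [NormedAddCommGroup E] [NormedSpace ℂ E]
    {n k : ℕ} {A : (Fin n → ℕ) → E} {P : (Fin n → ℂ) → E}
    (hP : ∀ z, HasSum (fun α : {α : Fin n → ℕ // ∑ i, α i = k} => (∏ i, z i ^ α.1 i) • A α.1)
      (P z))
    (ξ : ℂ) (z : Fin n → ℂ) : P (ξ • z) = ξ ^ k • P z := by
  have hmono : ∀ α : {α : Fin n → ℕ // ∑ i, α i = k},
      ∏ i, (ξ • z) i ^ α.1 i = ξ ^ k * ∏ i, z i ^ α.1 i := fun α => by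
    simp only [Pi.smul_apply, smul_eq_mul, mul_pow, prod_mul_distrib, prod_pow_eq_pow_sum, α.2]
  refine (hP (ξ • z)).unique ?_
  simpa only [hmono, mul_smul] using (hP z).const_smul (ξ ^ k)

theorem bohr_multidim_improved_monomial_general
    {H : Type*} [NormedAddCommGroup H] [InnerProductSpace ℂ H] [CompleteSpace H]
    {n : ℕ} (Q : Set (Fin n → ℂ))
    (hQcirc : ∀ z ∈ Q, ∀ ξ : ℂ, ‖ξ‖ ≤ 1 → ξ • z ∈ Q)
    (f : (Fin n → ℂ) → (H →L[ℂ] H))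
    (P : ℕ → (Fin n → ℂ) → (H →L[ℂ] H))
    (A : (Fin n → ℕ) → (H →L[ℂ] H))
    (hP : ∀ (k : ℕ) (z : Fin n → ℂ),
      HasSum (fun α : {α : Fin n → ℕ // ∑ i, α i = k} =>
        (∏ i, z i ^ α.1 i) • A α.1) (P k z))
    (hexp : ∀ z ∈ Q, HasSum (fun k => P k z) (f z))
    (hlt : ∀ z ∈ Q, ‖f z‖ < 1)
    (a₀ : ℂ) (ha₀ : ‖a₀‖ < 1)
    (hf0 : f 0 = a₀ • (1 : H →L[ℂ] H))
    (w : Fin n → ℂ) (hw : w ∈ Q)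
    (r : ℝ) (hr0 : 0 ≤ r) (hr : r ≤ 1 / 3) :
    Summable (fun k => ‖P k ((r : ℂ) • w)‖) ∧
    Summable (fun k : ℕ => (k : ℝ) * ‖P k ((r : ℂ) • w)‖ ^ 2) ∧
    ∑' k, ‖P k ((r : ℂ) • w)‖ +
        (8 / 9 : ℝ) * ∑' k : ℕ, (k : ℝ) * ‖P k ((r : ℂ) • w)‖ ^ 2 ≤ 1 := by
  have hom : ∀ k (ξ : ℂ) z, P k (ξ • z) = ξ ^ k • P k z := fun k =>
    apply_smul_of_hasSum_monomials (hP k)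
  have hQw : ∀ ξ ∈ ball (0 : ℂ) 1, ξ • w ∈ Q := fun ξ hξ =>
    hQcirc w hw ξ (mem_ball_zero_iff.mp hξ).le
  have hg : ∀ ξ ∈ ball (0 : ℂ) 1, HasSum (fun k => ξ ^ k • P k w) (f (ξ • w)) := fun ξ hξ => by
    simpa only [hom] using hexp _ (hQw ξ hξ)
  have hmaps : MapsTo (fun ξ : ℂ => f (ξ • w)) (ball 0 1) (ball 0 1) := fun ξ hξ =>
    mem_ball_zero_iff.mpr (hlt _ (hQw ξ hξ))
  have hcoeff : ∀ k, k ≠ 0 → ‖P k w‖ ≤ 1 - ‖a₀‖ ^ 2 := fun k hk =>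
    norm_coeff_le hg hmaps ha₀ (by simpa using hf0) hk
  have hcoeff0 : ‖P 0 w‖ ≤ ‖a₀‖ := by
    have h := (hg 0 (mem_ball_self one_pos)).unique (hasSum_zero_pow_smul fun k => P k w)
    rw [zero_smul, hf0] at h
    exact h ▸ norm_smul_one_le a₀
  have hnorm : ∀ k, ‖P k ((r : ℂ) • w)‖ = r ^ k * ‖P k w‖ := fun k => by
    rw [hom, norm_smul, norm_pow, Complex.norm_real, Real.norm_of_nonneg hr0]
  simp_rw [hnorm]
  exact improved_bohr_sum_le (fun k => norm_nonneg _) hcoeff0 hcoeff hr0 hr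

/-- Multidimensional improved operator valued Bohr inequality (monomial case):
on a complete circular domain `Q`, if `f = ∑ₖ Pₖ` with `‖f‖ < 1`, `f(0) = a₀ I`,
`|a₀| < 1`, and `∑ₖ k‖Pₖ(z)‖²` converges on `Q`, then for `r ∈ [0,1/3]` and
`w ∈ Q`, the point `z = r·w` satisfies `∑ₖ ‖Pₖ(z)‖ + (8/9)∑ₖ k‖Pₖ(z)‖² ≤ 1`. -/
theorem bohr_multidim_improved_monomial
    {H : Type*} [NormedAddCommGroup H] [InnerProductSpace ℂ H] [CompleteSpace H]
    {n : ℕ} (Q : Set (Fin n → ℂ))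
    (hQopen : IsOpen Q) (hQconn : IsConnected Q) (hQ0 : (0 : Fin n → ℂ) ∈ Q)
    (hQcirc : ∀ z ∈ Q, ∀ ξ : ℂ, ‖ξ‖ ≤ 1 → ξ • z ∈ Q)
    (f : (Fin n → ℂ) → (H →L[ℂ] H))
    (P : ℕ → (Fin n → ℂ) → (H →L[ℂ] H))
    (A : (Fin n → ℕ) → (H →L[ℂ] H))
    (hP : ∀ (k : ℕ) (z : Fin n → ℂ),
      HasSum (fun α : {α : Fin n → ℕ // ∑ i, α i = k} =>
        (∏ i, z i ^ α.1 i) • A α.1) (P k z))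
    (hexp : ∀ z ∈ Q, HasSum (fun k => P k z) (f z))
    (hlt : ∀ z ∈ Q, ‖f z‖ < 1)
    (a₀ : ℂ) (ha₀ : ‖a₀‖ < 1)
    (hf0 : f 0 = a₀ • (1 : H →L[ℂ] H))
    (hS : ∀ z ∈ Q, Summable (fun k : ℕ => (k : ℝ) * ‖P k z‖ ^ 2))
    (w : Fin n → ℂ) (hw : w ∈ Q)
    (r : ℝ) (hr0 : 0 ≤ r) (hr : r ≤ 1 / 3) :
    Summable (fun k => ‖P k ((r : ℂ) • w)‖) ∧
    Summable (fun k : ℕ => (k : ℝ) * ‖P k ((r : ℂ) • w)‖ ^ 2) ∧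
    ∑' k, ‖P k ((r : ℂ) • w)‖ +
        (8 / 9 : ℝ) * ∑' k : ℕ, (k : ℝ) * ‖P k ((r : ℂ) • w)‖ ^ 2 ≤ 1 :=
  bohr_multidim_improved_monomial_general Q hQcirc f P A hP hexp hlt a₀ ha₀ hf0 w hw r hr0 hr
end

section
/- Let H be a complex Hilbert space, N ≥ 1 an integer, p ∈ (0,1], and let R_{N,p} be the unique root in (0,1) of 2(1+r)r^N − p(1−r)² = 0. Then for every r with R_{N,p} < r < 1 there exist an analytic function f : 𝔻 → 𝓑(H) with power series expansion f(z) = ∑_{k=0}^∞ A_k z^k, ‖f(z)‖ ≤ 1 for all z ∈ 𝔻 and A₀ = a₀·I for some a₀ ∈ ℂ with |a₀| < 1, and a point z ∈ 𝔻 with |z| = r, such that ‖f(z)‖^p + ∑_{k=N}^∞ ‖A_k‖ r^k > 1. In fact, for a < 1 sufficiently close to 1 the function ψ_a(z) = ((a−z)/(1−az))·I evaluated at z = −r has this property; i.e., the radius R_{N,p} is best possible. -/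
/-!
For real `a ∈ (0, 1)` the Möbius map `ψ_a(w) = (a - w) / (1 - a w)` sends the disk into itself and
has Taylor coefficients `a, -(1 - a²), -(1 - a²) a, -(1 - a²) a², …`. At `z = -r` the Bohr-type
quantity for `ψ_a • I` is therefore
`Φ(a) = ((a + r) / (1 + a r))^p + (1 - a²) a^(N-1) r^N / (1 - a r)`.
Now `Φ(1) = 1` and `Φ'(1) = p (1 - r) / (1 + r) - 2 r^N / (1 - r)`, which is negative exactly when
`p (1 - r)² < 2 (1 + r) r^N`, i.e. when `r` lies beyond the root `R`; so `Φ(a) > 1` for `a < 1`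
close to `1`.
-/

open Filter Topology Complex

lemma eventually_lt_nhdsLT_of_hasDerivAt_neg {f : ℝ → ℝ} {f' x : ℝ} (hf : HasDerivAt f f' x)
    (hf' : f' < 0) : ∀ᶠ y in 𝓝[<] x, f x < f y := by
  have hslope : ∀ᶠ y in 𝓝[<] x, slope f x y < 0 :=
    (hasDerivAt_iff_tendsto_slope_left_right.mp hf).1.eventually (eventually_lt_nhds hf')
  filter_upwards [hslope, self_mem_nhdsWithin] with y hy (hyx : y < x)
  rw [slope_def_field, div_neg_iff] at hy
  rcases hy with ⟨h, -⟩ | ⟨-, h⟩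
  · linarith
  · linarith

def mobiusCoeff (a : ℂ) : ℕ → ℂ
  | 0 => a
  | k + 1 => -(1 - a ^ 2) * a ^ k

lemma hasSum_mobiusCoeff {a w : ℂ} (h : ‖a * w‖ < 1) :
    HasSum (fun k => w ^ k * mobiusCoeff a k) ((a - w) / (1 - a * w)) := by
  have hne : 1 - a * w ≠ 0 := sub_ne_zero.mpr fun h1 => by
    rw [← h1, norm_one] at h
    exact lt_irrefl 1 h
  rw [← hasSum_nat_add_iff' 1]
  have htail := (hasSum_geometric_of_norm_lt_one h).mul_left (-(1 - a ^ 2) * w)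
  have hfun : (fun k => w ^ (k + 1) * mobiusCoeff a (k + 1))
      = fun k => -(1 - a ^ 2) * w * (a * w) ^ k := by
    ext k
    simp only [mobiusCoeff]
    ring
  have hval : (a - w) / (1 - a * w) - ∑ k ∈ Finset.range 1, w ^ k * mobiusCoeff a k
      = -(1 - a ^ 2) * w * (1 - a * w)⁻¹ := by
    simp only [Finset.sum_range_one, pow_zero, one_mul, mobiusCoeff]
    field_simp
    ring
  rwa [hfun, hval]

lemma normSq_one_sub_mul_sub_normSq_sub (a : ℝ) (w : ℂ) :
    normSq (1 - a * w) - normSq (a - w) = (1 - a ^ 2) * (1 - normSq w) := by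
  simp only [normSq_apply, sub_re, sub_im, mul_re, mul_im, ofReal_re, ofReal_im, one_re, one_im]
  ring

lemma norm_mobius_le_one {a : ℝ} (ha : |a| ≤ 1) {w : ℂ} (hw : ‖w‖ ≤ 1) :
    ‖(a - w) / (1 - a * w)‖ ≤ 1 := by
  rw [norm_div]
  refine div_le_one_of_le₀ ?_ (norm_nonneg _)
  have ha2 : 0 ≤ 1 - a ^ 2 := by nlinarith [sq_abs a, abs_nonneg a]
  have hw2 : 0 ≤ 1 - normSq w := by
    rw [← Complex.sq_norm]; nlinarith [norm_nonneg w]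
  rw [← pow_le_pow_iff_left₀ (norm_nonneg _) (norm_nonneg _) two_ne_zero, Complex.sq_norm,
    Complex.sq_norm]
  nlinarith [normSq_one_sub_mul_sub_normSq_sub a w, mul_nonneg ha2 hw2]

lemma norm_mobiusCoeff_succ {a : ℝ} (ha0 : 0 ≤ a) (ha1 : a ≤ 1) (k : ℕ) :
    ‖mobiusCoeff a (k + 1)‖ = (1 - a ^ 2) * a ^ k := by
  have : mobiusCoeff a (k + 1) = ((-((1 - a ^ 2) * a ^ k) : ℝ) : ℂ) := by
    simp only [mobiusCoeff]; push_cast; ring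
  rw [this, norm_real, norm_neg, Real.norm_of_nonneg (mul_nonneg (by nlinarith) (pow_nonneg ha0 k))]

lemma hasSum_norm_mobiusCoeff_mul_pow_tail {a r : ℝ} (ha0 : 0 ≤ a) (ha1 : a ≤ 1) (hr0 : 0 ≤ r)
    (har : a * r < 1) (n : ℕ) :
    HasSum (fun k => ‖mobiusCoeff a (n + 1 + k)‖ * r ^ (n + 1 + k))
      ((1 - a ^ 2) * a ^ n * r ^ (n + 1) / (1 - a * r)) := by
  have hterm : ∀ k, ‖mobiusCoeff a (n + 1 + k)‖ * r ^ (n + 1 + k)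
      = (1 - a ^ 2) * a ^ n * r ^ (n + 1) * (a * r) ^ k := by
    intro k
    rw [add_right_comm, norm_mobiusCoeff_succ ha0 ha1]
    ring
  simp only [hterm, div_eq_mul_inv]
  exact (hasSum_geometric_of_lt_one (by positivity) har).mul_left _

lemma mul_one_sub_sq_lt_of_root {N : ℕ} {p R r : ℝ} (hp0 : 0 < p) (hR0 : 0 < R)
    (hroot : 2 * (1 + R) * R ^ N = p * (1 - R) ^ 2) (hRr : R < r) (hr1 : r < 1) :
    p * (1 - r) ^ 2 < 2 * (1 + r) * r ^ N := by
  have hsq : (1 - r) ^ 2 < (1 - R) ^ 2 := by nlinarith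
  have hpow : R ^ N ≤ r ^ N := pow_le_pow_left₀ hR0.le hRr.le N
  nlinarith [mul_lt_mul_of_pos_left hsq hp0, pow_nonneg hR0.le N]

lemma hasDerivAt_rpow_mobius_at_one (p r : ℝ) (hr : 1 + r ≠ 0) :
    HasDerivAt (fun a => ((a + r) / (1 + a * r)) ^ p) (p * (1 - r) / (1 + r)) 1 := by
  have hmob : HasDerivAt (fun a => (a + r) / (1 + a * r)) ((1 - r) / (1 + r)) 1 :=
    (((hasDerivAt_id' 1).add_const r).div (((hasDerivAt_id' 1).mul_const r).const_add 1)
      (by simpa using hr)).congr_deriv (by field_simp)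
  have hone : (1 + r) / (1 + 1 * r) = 1 := by rw [one_mul, div_self hr]
  exact (hmob.rpow_const (p := p) (Or.inl (by rw [hone]; exact one_ne_zero))).congr_deriv
    (by rw [hone, Real.one_rpow]; ring)

lemma hasDerivAt_mobiusTail_at_one (n : ℕ) (r : ℝ) (hr : 1 - r ≠ 0) :
    HasDerivAt (fun a => (1 - a ^ 2) * a ^ n * r ^ (n + 1) / (1 - a * r))
      (-2 * r ^ (n + 1) / (1 - r)) 1 := by
  have hnum : HasDerivAt (fun a : ℝ => (1 - a ^ 2) * a ^ n * r ^ (n + 1)) (-2 * r ^ (n + 1)) 1 :=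
    ((((hasDerivAt_pow 2 (1 : ℝ)).const_sub 1).mul (hasDerivAt_pow n 1)).mul_const
      (r ^ (n + 1))).congr_deriv (by simp)
  exact (hnum.div (((hasDerivAt_id' 1).mul_const r).const_sub 1) (by simpa using hr)).congr_deriv
    (by field_simp; ring)

lemma exists_one_lt_rpow_mobius_add_tail {n : ℕ} {p r : ℝ} (hr0 : 0 ≤ r) (hr1 : r < 1)
    (h : p * (1 - r) ^ 2 < 2 * (1 + r) * r ^ (n + 1)) :
    ∃ a, 0 < a ∧ a < 1 ∧
      1 < ((a + r) / (1 + a * r)) ^ p + (1 - a ^ 2) * a ^ n * r ^ (n + 1) / (1 - a * r) := by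
  have hderiv := (hasDerivAt_rpow_mobius_at_one p r (by linarith)).add
    (hasDerivAt_mobiusTail_at_one n r (by linarith))
  have hneg : p * (1 - r) / (1 + r) + -2 * r ^ (n + 1) / (1 - r) < 0 := by
    rw [div_add_div _ _ (by linarith) (by linarith)]
    exact div_neg_of_neg_of_pos (by nlinarith) (by nlinarith)
  obtain ⟨a, hgt, ha⟩ := ((eventually_lt_nhdsLT_of_hasDerivAt_neg hderiv hneg).and
    (Ioo_mem_nhdsLT (zero_lt_one' ℝ))).exists
  refine ⟨a, ha.1, ha.2, lt_of_eq_of_lt ?_ hgt⟩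
  simp [div_self (by linarith : 1 + r ≠ 0)]

theorem bohr_fz_pow_p_sharpness_general
    {H : Type*} [NormedAddCommGroup H] [InnerProductSpace ℂ H]
    [Nontrivial H]
    (N : ℕ) (hN : 1 ≤ N) (p : ℝ) (hp0 : 0 < p)
    (R : ℝ) (hR0 : 0 < R)
    (hroot : 2 * (1 + R) * R ^ N = p * (1 - R) ^ 2)
    (r : ℝ) (hr1 : R < r) (hr2 : r < 1) :
    ∃ (f : ℂ → (H →L[ℂ] H)) (A : ℕ → (H →L[ℂ] H)) (a₀ : ℂ) (z : ℂ),
      (∀ w ∈ Metric.ball (0 : ℂ) 1, HasSum (fun k => w ^ k • A k) (f w)) ∧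
      (∀ w ∈ Metric.ball (0 : ℂ) 1, ‖f w‖ ≤ 1) ∧
      A 0 = a₀ • (1 : H →L[ℂ] H) ∧ ‖a₀‖ < 1 ∧ ‖z‖ = r ∧
      Summable (fun k => ‖A (N + k)‖ * r ^ (N + k)) ∧
      1 < ‖f z‖ ^ p + ∑' k, ‖A (N + k)‖ * r ^ (N + k) := by
  obtain ⟨n, rfl⟩ := Nat.exists_eq_add_of_le' hN
  have hr0 : 0 < r := hR0.trans hr1
  obtain ⟨a, ha0, ha1, hgt⟩ := exists_one_lt_rpow_mobius_add_tail hr0.le hr2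
    (mul_one_sub_sq_lt_of_root hp0 hR0 hroot hr1 hr2)
  have htail := hasSum_norm_mobiusCoeff_mul_pow_tail ha0.le ha1.le hr0.le (by nlinarith) n
  have hnorm : ∀ c : ℂ, ‖c • (1 : H →L[ℂ] H)‖ = ‖c‖ := Algebra.norm_smul_one_eq_norm _
  refine ⟨fun w => ((a - w) / (1 - a * w)) • 1, fun k => mobiusCoeff a k • 1, a, -r,
    fun w hw => ?_, fun w hw => ?_, rfl, ?_, ?_, ?_, ?_⟩
  · have haw : ‖(a : ℂ) * w‖ < 1 := by
      rw [norm_mul, norm_real, Real.norm_of_nonneg ha0.le]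
      nlinarith [norm_nonneg w, mem_ball_zero_iff.mp hw]
    simpa only [smul_smul] using (hasSum_mobiusCoeff haw).smul_const (1 : H →L[ℂ] H)
  · rw [hnorm]
    exact norm_mobius_le_one (abs_le.mpr ⟨by linarith, ha1.le⟩) (mem_ball_zero_iff.mp hw).le
  · rwa [norm_real, Real.norm_of_nonneg ha0.le]
  · simp [hr0.le]
  · simpa only [hnorm] using htail.summable
  · have hz : ((a : ℂ) - -r) / (1 - a * -r) = ((a + r) / (1 + a * r) : ℝ) := by
      push_cast; ring
    have hpos : 0 ≤ (a + r) / (1 + a * r) := by positivity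
    simpa only [hnorm, htail.tsum_eq, hz, norm_real, Real.norm_of_nonneg hpos] using hgt

/-- Sharpness of the radius `R_{N,p}`: if `R ∈ (0,1)` is the root of
`2(1+r)rᴺ = p(1-r)²`, then for every `r ∈ (R,1)` there exist an operator valued
analytic function `f(z) = ∑ₖ Aₖ zᵏ` bounded by `1` on the unit disk with
`A₀ = a₀ I`, `|a₀| < 1`, and a point `z` with `|z| = r`, such that
`‖f(z)‖^p + ∑_{k≥N} ‖Aₖ‖ rᵏ > 1`. -/
theorem bohr_fz_pow_p_sharpness
    {H : Type*} [NormedAddCommGroup H] [InnerProductSpace ℂ H] [CompleteSpace H]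
    [Nontrivial H]
    (N : ℕ) (hN : 1 ≤ N) (p : ℝ) (hp0 : 0 < p) (hp1 : p ≤ 1)
    (R : ℝ) (hR0 : 0 < R) (hR1 : R < 1)
    (hroot : 2 * (1 + R) * R ^ N = p * (1 - R) ^ 2)
    (r : ℝ) (hr1 : R < r) (hr2 : r < 1) :
    ∃ (f : ℂ → (H →L[ℂ] H)) (A : ℕ → (H →L[ℂ] H)) (a₀ : ℂ) (z : ℂ),
      (∀ w ∈ Metric.ball (0 : ℂ) 1, HasSum (fun k => w ^ k • A k) (f w)) ∧
      (∀ w ∈ Metric.ball (0 : ℂ) 1, ‖f w‖ ≤ 1) ∧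
      A 0 = a₀ • (1 : H →L[ℂ] H) ∧ ‖a₀‖ < 1 ∧ ‖z‖ = r ∧
      Summable (fun k => ‖A (N + k)‖ * r ^ (N + k)) ∧
      1 < ‖f z‖ ^ p + ∑' k, ‖A (N + k)‖ * r ^ (N + k) :=
  bohr_fz_pow_p_sharpness_general N hN p hp0 R hR0 hroot r hr1 hr2
end
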